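/- Let s₀ ≤ A < B and define c^{A,B}(x) := E[ 1_{H_A ≤ T} · (S_{T∧H_B} − x)⁺ ] for x ∈ ℝ. Then c^{A,B}(x) = 0 for all x ≥ B, and the left derivative of c^{A,B} at B equals −ℙ(H_B ≤ T). -/

import Mathlib

open MeasureTheory Set Filter

noncomputable section

/-- The running maximum `M_T(ω) = sup_{t ∈ [0,T]} S_t(ω)`. -/
def runMax {Ω : Type} (S : ℝ → Ω → ℝ) (T : ℝ) (ω : Ω) : ℝ :=
  ⨆ t : Icc (0:ℝ) T, S t ω

/-- The stopped value `S_{T ∧ H_B}(ω)`, where `H_B` is the first hitting time of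
`[B, ∞)` by `S` during the time interval `[0,T]` (`= S_T(ω)` if `B` is not reached). -/
def stopVal {Ω : Type} (S : ℝ → Ω → ℝ) (B T : ℝ) (ω : Ω) : ℝ :=
  S (hittingBtwn S (Ici B) 0 T ω) ω

/-- The event `{H_B ≤ T}`: the level `B` is reached by `S` during `[0,T]`. -/
def hitEvent {Ω : Type} (S : ℝ → Ω → ℝ) (B T : ℝ) : Set Ω :=
  {ω | ∃ t ∈ Icc (0:ℝ) T, B ≤ S t ω}

/-- `S` is an adapted martingale on the time interval `[0,T]` with continuous sample
paths, a.s. (strictly) positive values, and initial value `s₀`. -/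
structure IsPosContMart {Ω : Type} [mΩ : MeasurableSpace Ω]
    (ℙ : Measure Ω) (ℱ : Filtration ℝ mΩ) (S : ℝ → Ω → ℝ) (s₀ T : ℝ) : Prop where
  adapted : ∀ t ∈ Icc (0:ℝ) T, StronglyMeasurable[ℱ t] (S t)
  integrable : ∀ t ∈ Icc (0:ℝ) T, Integrable (S t) ℙ
  mart : ∀ s t : ℝ, s ∈ Icc (0:ℝ) T → t ∈ Icc (0:ℝ) T → s ≤ t →
    ℙ[S t|ℱ s] =ᵐ[ℙ] S s
  contPaths : ∀ ω, ContinuousOn (fun t => S t ω) (Icc (0:ℝ) T)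
  pos : ∀ t ∈ Icc (0:ℝ) T, ∀ᵐ ω ∂ℙ, 0 < S t ω
  init : ∀ᵐ ω ∂ℙ, S 0 ω = s₀

/-!
Because the paths are continuous and start below `B`, the stopped value `S_{T∧H_B}` equals `B`
on `{H_B ≤ T}` and equals `S_T < B` off it. So the payoff never exceeds `B`, which gives
`c^{A,B} = 0` on `[B, ∞)`, and for `x < B` the difference quotient `c^{A,B}(x) / (B - x)` is the
expectation of `1_{H_A ≤ T} (S_{T∧H_B} - x)⁺ / (B - x) ∈ [0, 1]`, which converges pointwise to
`1_{H_A ≤ T} 1_{S_{T∧H_B} = B} = 1_{H_B ≤ T}`; dominated convergence gives the left derivative.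
-/

open Topology

theorem measurableSet_exists_le_of_continuous {ι Ω : Type*} [TopologicalSpace ι] [CompactSpace ι]
    [TopologicalSpace.SeparableSpace ι] [MeasurableSpace Ω] {X : ι → Ω → ℝ}
    (hmeas : ∀ t, Measurable (X t)) (hcont : ∀ ω, Continuous fun t => X t ω) (b : ℝ) :
    MeasurableSet {ω | ∃ t, b ≤ X t ω} := by
  obtain ⟨D, hDc, hD⟩ := TopologicalSpace.exists_countable_dense ι
  have hrepr : {ω | ∃ t, b ≤ X t ω} = ⋂ n : ℕ, ⋃ q ∈ D, {ω | b - 1 / (n + 1) < X q ω} := by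
    ext ω
    simp only [mem_ofPred_eq, mem_iInter, mem_iUnion, exists_prop]
    constructor
    · rintro ⟨t, ht⟩ n
      refine hD.exists_mem_open (isOpen_lt continuous_const (hcont ω)) ⟨t, ?_⟩
      have : (0 : ℝ) < 1 / (n + 1) := Nat.one_div_pos_of_nat
      show b - 1 / (n + 1) < X t ω
      linarith
    · intro h
      obtain ⟨t₀, -, ht₀⟩ := isCompact_univ.exists_isMaxOn
        (let ⟨q, _, _⟩ := h 0; ⟨q, mem_univ q⟩) (hcont ω).continuousOn
      refine ⟨t₀, not_lt.1 fun hlt => ?_⟩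
      obtain ⟨n, hn⟩ := exists_nat_one_div_lt (sub_pos.2 hlt)
      obtain ⟨q, -, hq⟩ := h n
      have : X q ω ≤ X t₀ ω := ht₀ (mem_univ q)
      linarith
  rw [hrepr]
  exact .iInter fun n => .biUnion hDc fun q _ => measurableSet_lt measurable_const (hmeas q)

theorem integral_max_sub_eq_zero {α : Type*} [MeasurableSpace α] {μ : Measure α} {Y : α → ℝ}
    {b x : ℝ} (hYb : ∀ᵐ a ∂μ, Y a ≤ b) (hx : b ≤ x) : ∫ a, max (Y a - x) 0 ∂μ = 0 :=
  integral_eq_zero_of_ae <| hYb.mono fun a ha => max_eq_right (by linarith)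

theorem hasDerivWithinAt_integral_max_sub {α : Type*} [MeasurableSpace α] {μ : Measure α}
    [IsFiniteMeasure μ] {Y : α → ℝ} {b : ℝ} (hY : Measurable Y) (hYb : ∀ a, Y a ≤ b) :
    HasDerivWithinAt (fun x => ∫ a, max (Y a - x) 0 ∂μ) (-μ.real {a | Y a = b}) (Iio b) b := by
  set F : ℝ → α → ℝ := fun x a => max (Y a - x) 0 / (b - x)
  -- `F x ∈ [0, 1]` and `F x → 𝟙{Y = b}` pointwise as `x ↑ b`.
  have hF_tendsto : Tendsto (fun x => ∫ a, F x a ∂μ) (𝓝[<] b)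
      (𝓝 (∫ a, {a | Y a = b}.indicator 1 a ∂μ)) := by
    refine tendsto_integral_filter_of_dominated_convergence (fun _ => 1)
      (Eventually.of_forall fun x => (((hY.sub_const x).max measurable_const).div_const _)
        |>.aestronglyMeasurable) ?_ (integrable_const 1) (ae_of_all _ fun a => ?_)
    · filter_upwards [self_mem_nhdsWithin] with x (hx : x < b)
      refine ae_of_all _ fun a => ?_
      rw [Real.norm_of_nonneg (div_nonneg (le_max_right _ _) (sub_pos.2 hx).le),
        div_le_one (sub_pos.2 hx)]
      exact max_le (by linarith [hYb a]) (sub_pos.2 hx).le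
    · rcases (hYb a).eq_or_lt with hYa | hYa
      · refine tendsto_const_nhds.congr' ?_
        filter_upwards [self_mem_nhdsWithin] with x (hx : x < b)
        simp [F, hYa, indicator, (sub_pos.2 hx).le, (sub_pos.2 hx).ne']
      · refine tendsto_const_nhds.congr' ?_
        filter_upwards [Ioo_mem_nhdsLT hYa] with x hx
        simp [F, hYa.ne, indicator, max_eq_right (sub_nonpos.2 hx.1.le)]
  rw [integral_indicator_one (measurableSet_eq_fun hY measurable_const)] at hF_tendsto
  rw [hasDerivWithinAt_iff_tendsto_slope, sdiff_singleton_eq_self (s := Iio b) self_notMem_Iio]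
  refine hF_tendsto.neg.congr' ?_
  filter_upwards [self_mem_nhdsWithin] with x (hx : x < b)
  rw [slope_def_field, integral_max_sub_eq_zero (ae_of_all _ hYb) le_rfl, integral_div,
    sub_zero, ← neg_sub b x, div_neg]

section HittingTimes

variable {Ω : Type} {S : ℝ → Ω → ℝ} {B T : ℝ} {ω : Ω}

theorem hitEvent_subset_hitEvent {A : ℝ} (hAB : A ≤ B) : hitEvent S B T ⊆ hitEvent S A T :=
  fun _ ⟨t, ht, hB⟩ => ⟨t, ht, hAB.trans hB⟩

theorem lt_of_notMem_hitEvent (hT : 0 ≤ T) (h : ω ∉ hitEvent S B T) : S T ω < B :=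
  not_le.1 fun hB => h ⟨T, ⟨hT, le_rfl⟩, hB⟩

theorem stopVal_of_notMem_hitEvent (h : ω ∉ hitEvent S B T) : stopVal S B T ω = S T ω := by
  rw [stopVal, hittingBtwn, if_neg (show ¬∃ t ∈ Icc (0 : ℝ) T, S t ω ∈ Ici B from h)]

theorem le_stopVal_of_mem_hitEvent (hcont : ContinuousOn (fun t => S t ω) (Icc 0 T))
    (h : ω ∈ hitEvent S B T) : B ≤ stopVal S B T ω := by
  have h' : ∃ t ∈ Icc (0 : ℝ) T, S t ω ∈ Ici B := h
  have hclosed : IsClosed (Icc (0 : ℝ) T ∩ {t | S t ω ∈ Ici B}) :=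
    hcont.preimage_isClosed_of_isClosed isClosed_Icc isClosed_Ici
  rw [stopVal, hittingBtwn, if_pos h']
  exact (hclosed.csInf_mem (let ⟨t, ht, hB⟩ := h'; ⟨t, ht, hB⟩) ⟨0, fun t ht => ht.1.1⟩).2

-- A path started below `B` cannot overshoot `B` at the hitting time: by the intermediate value
-- theorem it would have crossed `B` earlier.
theorem stopVal_le (hT : 0 ≤ T) (hcont : ContinuousOn (fun t => S t ω) (Icc 0 T))
    (h0 : S 0 ω ≤ B) : stopVal S B T ω ≤ B := by
  have hτ := hittingBtwn_mem_Icc (u := S) (s := Ici B) hT ω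
  refine not_lt.1 fun hlt => ?_
  obtain ⟨t, ht, hSt⟩ := intermediate_value_Icc hτ.1 (hcont.mono (Icc_subset_Icc_right hτ.2))
    ⟨h0, hlt.le⟩
  have hτt : hittingBtwn S (Ici B) 0 T ω ≤ t := hittingBtwn_le_of_mem ht.1 (ht.2.trans hτ.2) hSt.ge
  exact hlt.ne' (by rw [stopVal, ← le_antisymm ht.2 hτt]; exact hSt)

open Classical in
theorem stopVal_ae_eq_piecewise [MeasurableSpace Ω] {μ : Measure Ω} (hT : 0 ≤ T)
    (hcont : ∀ ω, ContinuousOn (fun t => S t ω) (Icc 0 T)) (h0 : ∀ᵐ ω ∂μ, S 0 ω ≤ B) :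
    stopVal S B T =ᵐ[μ] (hitEvent S B T).piecewise (fun _ => B) (S T) := by
  filter_upwards [h0] with ω hω
  by_cases h : ω ∈ hitEvent S B T
  · rw [piecewise_eq_of_mem _ _ _ h]
    exact (stopVal_le hT (hcont ω) hω).antisymm (le_stopVal_of_mem_hitEvent (hcont ω) h)
  · rw [piecewise_eq_of_notMem _ _ _ h, stopVal_of_notMem_hitEvent h]

theorem measurableSet_hitEvent [MeasurableSpace Ω] (hmeas : ∀ t ∈ Icc 0 T, Measurable (S t))
    (hcont : ∀ ω, ContinuousOn (fun t => S t ω) (Icc 0 T)) : MeasurableSet (hitEvent S B T) := by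
  have : hitEvent S B T = {ω | ∃ t : Icc (0 : ℝ) T, B ≤ S t ω} := by
    ext ω; simp [hitEvent]
  rw [this]
  exact measurableSet_exists_le_of_continuous (X := fun t : Icc (0 : ℝ) T => S t)
    (fun t => hmeas t t.2) (fun ω => continuousOn_iff_continuous_domRestrict.1 (hcont ω)) B

open Classical in
theorem piecewise_hitEvent_le (hT : 0 ≤ T) (ω : Ω) :
    (hitEvent S B T).piecewise (fun _ => B) (S T) ω ≤ B := by
  by_cases h : ω ∈ hitEvent S B T
  · simp [h]
  · simpa [h] using (lt_of_notMem_hitEvent hT h).le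

open Classical in
theorem setOf_piecewise_hitEvent_eq (hT : 0 ≤ T) :
    {ω | (hitEvent S B T).piecewise (fun _ => B) (S T) ω = B} = hitEvent S B T := by
  ext ω
  by_cases h : ω ∈ hitEvent S B T
  · simp [h]
  · simp [h, (lt_of_notMem_hitEvent hT h).ne]

end HittingTimes

theorem stmt_14_general {Ω : Type} [mΩ : MeasurableSpace Ω] (ℙ : Measure Ω) [IsProbabilityMeasure ℙ]
    (ℱ : Filtration ℝ mΩ) (S : ℝ → Ω → ℝ) (s₀ T : ℝ) (hT : 0 < T)
    (hS : IsPosContMart ℙ ℱ S s₀ T) (A B : ℝ) (hA : s₀ ≤ A) (hAB : A < B) :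
    (∀ x : ℝ, B ≤ x → (∫ ω in hitEvent S A T, max (stopVal S B T ω - x) 0 ∂ℙ) = 0) ∧
    HasDerivWithinAt (fun x => ∫ ω in hitEvent S A T, max (stopVal S B T ω - x) 0 ∂ℙ)
      (-(ℙ (hitEvent S B T)).toReal) (Iio B) B := by
  classical
  have hmeas : ∀ t ∈ Icc 0 T, Measurable (S t) := fun t ht =>
    (hS.adapted t ht).measurable.mono (ℱ.le t) le_rfl
  have hHit := measurableSet_hitEvent (B := B) hmeas hS.contPaths
  set Y := (hitEvent S B T).piecewise (fun _ => B) (S T)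
  have hY : Measurable Y := Measurable.piecewise hHit measurable_const (hmeas T ⟨hT.le, le_rfl⟩)
  have hc : ∀ x, ∫ ω in hitEvent S A T, max (stopVal S B T ω - x) 0 ∂ℙ
      = ∫ ω in hitEvent S A T, max (Y ω - x) 0 ∂ℙ := fun x => by
    refine integral_congr_ae (ae_restrict_of_ae ?_)
    filter_upwards [stopVal_ae_eq_piecewise hT.le hS.contPaths
      (hS.init.mono fun ω h => h ▸ hA.trans hAB.le)] with ω hω
    rw [hω]
  simp only [hc]
  refine ⟨fun x hx => integral_max_sub_eq_zero (ae_of_all _ (piecewise_hitEvent_le hT.le)) hx,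
    (hasDerivWithinAt_integral_max_sub hY (piecewise_hitEvent_le hT.le)).congr_deriv ?_⟩
  rw [setOf_piecewise_hitEvent_eq hT.le, measureReal_restrict_apply hHit,
    inter_eq_left.2 (hitEvent_subset_hitEvent hAB.le), measureReal_def]

/-- For `s₀ ≤ A < B` and `c^{A,B}(x) = E[1_{H_A ≤ T}·(S_{T∧H_B} − x)⁺]`:
`c^{A,B}(x) = 0` for all `x ≥ B`, and the left derivative of `c^{A,B}` at `B` equals
`−ℙ(H_B ≤ T)`. -/
theorem stmt_14 {Ω : Type} [mΩ : MeasurableSpace Ω] (ℙ : Measure Ω) [IsProbabilityMeasure ℙ]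
    (ℱ : Filtration ℝ mΩ) (S : ℝ → Ω → ℝ) (s₀ T : ℝ) (hs₀ : 0 < s₀) (hT : 0 < T)
    (hS : IsPosContMart ℙ ℱ S s₀ T) (A B : ℝ) (hA : s₀ ≤ A) (hAB : A < B) :
    (∀ x : ℝ, B ≤ x → (∫ ω in hitEvent S A T, max (stopVal S B T ω - x) 0 ∂ℙ) = 0) ∧
    HasDerivWithinAt (fun x => ∫ ω in hitEvent S A T, max (stopVal S B T ω - x) 0 ∂ℙ)
      (-(ℙ (hitEvent S B T)).toReal) (Iio B) B :=
  stmt_14_general (mΩ := mΩ) ℙ ℱ S s₀ T hT hS A B hA hAB
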